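/- Fix closure scopes C ∈ {none, object, session, explicit} and ordering scopes O ∈ {trivial, object, all} as below, and define readability A ⪯ B between configurations A = (C_A, O_A) and B = (C_B, O_B) by: for every finite labeled causal DAG (M, E, obj, sess) and every strict linear order ≺ on M refining E, every A-admissible cut is B-admissible. Define κ(trivial) = none, κ(object) = object, κ(all) = explicit. Then A ⪯ B if and only if: O_A ≥ O_B in the chain trivial < object < all, and for every finite labeled causal DAG and every message m, deps_{C_B}(m) ⊆ deps_{C_A}(m) ∪ deps_{κ(O_A)}(m). -/

import Mathlib

/-- Closure scopes. -/
inductive CScope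
  | none | object | session | explicit
deriving DecidableEq

/-- Ordering scopes. -/
inductive OScope
  | trivial | object | all
deriving DecidableEq

/-- A finite labeled causal DAG: a finite type of messages with an irreflexive
acyclic edge relation and object/session labels. -/
structure LDag where
  M : Type
  [fin : Fintype M]
  O0 : Type
  S0 : Type
  E : M → M → Prop
  irr : Irreflexive E
  acyc : Irreflexive (Relation.TransGen E)
  obj : M → O0
  sess : M → S0

/-- The closure filters `deps_C`. -/
def LDag.deps (G : LDag) : CScope → G.M → Set G.M
  | .none, _ => ∅
  | .object, m => {m' | G.E m' m ∧ G.obj m' = G.obj m}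
  | .session, m => {m' | G.E m' m ∧ G.sess m' = G.sess m}
  | .explicit, m => {m' | G.E m' m}

/-- Same-class relation of an ordering scope. -/
def LDag.sameClass (G : LDag) : OScope → G.M → G.M → Prop
  | .trivial, a, b => a = b
  | .object, a, b => G.obj a = G.obj b
  | .all, _, _ => True

/-- `V` is closed under the filter `deps_C`. -/
def LDag.closedUnder (G : LDag) (C : CScope) (V : Set G.M) : Prop :=
  ∀ m ∈ V, G.deps C m ⊆ V

/-- `V` is a per-class prefix for the ordering scope `O` w.r.t. `prec`. -/
def LDag.isPrefix (G : LDag) (O : OScope) (prec : G.M → G.M → Prop) (V : Set G.M) : Prop :=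
  ∀ m ∈ V, ∀ m', G.sameClass O m' m → prec m' m → m' ∈ V

/-- A cut `V` is admissible under the configuration `(C, O)` w.r.t. `(E, prec)`. -/
def LDag.admissible (G : LDag) (prec : G.M → G.M → Prop) (C : CScope) (O : OScope)
    (V : Set G.M) : Prop :=
  G.closedUnder C V ∧ G.isPrefix O prec V

/-- `prec` refines the causal order (causal arbitration). -/
def LDag.refines (G : LDag) (prec : G.M → G.M → Prop) : Prop :=
  ∀ m' m, G.E m' m → prec m' m

/-- A configuration is a pair of a closure scope and an ordering scope. -/
abbrev Config := CScope × OScope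

/-- Readability under causal arbitration: every `A`-admissible cut is
`B`-admissible, on every finite labeled causal DAG and every strict linear
order refining the causal edges. -/
def Readable (A B : Config) : Prop :=
  ∀ G : LDag, ∀ prec : G.M → G.M → Prop,
    IsStrictTotalOrder G.M prec → G.refines prec →
    ∀ V : Set G.M, G.admissible prec A.1 A.2 V → G.admissible prec B.1 B.2 V

/-- The chain `trivial < object < all` on ordering scopes, as a rank. -/
def OScope.rank : OScope → ℕ
  | .trivial => 0
  | .object => 1
  | .all => 2

/-- The κ map: the closure entailed by an ordering scope. -/
def kappa : OScope → CScope
  | .trivial => .none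
  | .object => .object
  | .all => .explicit

/-! The forward direction tests readability on two-message DAGs `false → true` (with or without
the edge) ordered by `false < true`: the cut `{true}` is admissible exactly when `false` is neither
a dependency of `true` nor in its ordering class. Choosing the labels of the two messages, or
copying them from an edge `m' → m` of an arbitrary DAG, forces both conditions. Conversely, a
per-class prefix for `O` is closed under `deps_{κ(O)}` because the order refines the edges, and a
coarser ordering scope has more prefix constraints. -/

namespace LDag

variable (G : LDag)

lemma E_of_mem_deps {C : CScope} {m' m : G.M} (h : m' ∈ G.deps C m) : G.E m' m := by
  cases C with
  | none => exact h.elim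
  | object | session => exact h.1
  | explicit => exact h

lemma sameClass_mono {O O' : OScope} (h : O.rank ≤ O'.rank) {a b : G.M}
    (hab : G.sameClass O a b) : G.sameClass O' a b := by
  cases O <;> cases O' <;> simp_all [OScope.rank, sameClass]

lemma isPrefix_mono {O O' : OScope} (h : O.rank ≤ O'.rank) {prec : G.M → G.M → Prop}
    {V : Set G.M} (hV : G.isPrefix O' prec V) : G.isPrefix O prec V :=
  fun m hm m' hsc hp => hV m hm m' (G.sameClass_mono h hsc) hp

lemma mem_deps_kappa_iff (O : OScope) {m' m : G.M} (hE : G.E m' m) :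
    m' ∈ G.deps (kappa O) m ↔ G.sameClass O m' m := by
  cases O with
  | trivial => exact iff_of_false id fun h => G.irr m (h ▸ hE)
  | object => exact and_iff_right hE
  | all => exact iff_of_true hE trivial

lemma closedUnder_kappa {O : OScope} {prec : G.M → G.M → Prop} (href : G.refines prec)
    {V : Set G.M} (hV : G.isPrefix O prec V) : G.closedUnder (kappa O) V := by
  intro m hm m' hm'
  have hE := G.E_of_mem_deps hm'
  exact hV m hm m' ((G.mem_deps_kappa_iff O hE).mp hm') (href m' m hE)

lemma closedUnder_of_deps_subset_union {C C₁ C₂ : CScope}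
    (hsub : ∀ m, G.deps C m ⊆ G.deps C₁ m ∪ G.deps C₂ m) {V : Set G.M}
    (h₁ : G.closedUnder C₁ V) (h₂ : G.closedUnder C₂ V) : G.closedUnder C V := by
  intro m hm m' hm'
  rcases hsub m hm' with hd | hd
  exacts [h₁ m hm hd, h₂ m hm hd]

abbrev pair {O0 S0 : Type} (p : Prop) (obj : Bool → O0) (sess : Bool → S0) : LDag where
  M := Bool
  O0 := O0
  S0 := S0
  E x y := p ∧ x < y
  irr x h := lt_irrefl x h.2
  acyc x h := lt_irrefl x (Relation.transGen_minimal (r' := (· < ·)) (fun _ _ h => h.2) _ _ h)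
  obj := obj
  sess := sess

section pair

variable {O0 S0 : Type} (p : Prop) (obj : Bool → O0) (sess : Bool → S0)

lemma pair_refines : (pair p obj sess).refines (fun x y : Bool => x < y) :=
  fun _ _ h => h.2

lemma pair_admissible_true_iff (C : CScope) (O : OScope) :
    (pair p obj sess).admissible (fun x y : Bool => x < y) C O {true} ↔
      false ∉ (pair p obj sess).deps C true ∧ ¬ (pair p obj sess).sameClass O false true := by
  simp +decide [admissible, closedUnder, isPrefix, Set.subset_singleton_iff, Bool.forall_bool]

end pair

abbrev pairOf (a b : G.M) : LDag :=
  pair (G.E a b) (fun x => G.obj (cond x b a)) (fun x => G.sess (cond x b a))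

lemma pairOf_mem_deps_iff {a b : G.M} (C : CScope) :
    false ∈ (G.pairOf a b).deps C true ↔ a ∈ G.deps C b := by
  cases C <;> simp [pairOf, pair, deps, Set.mem_ofPred_eq]

lemma pairOf_sameClass_iff {a b : G.M} (hab : a ≠ b) (O : OScope) :
    (G.pairOf a b).sameClass O false true ↔ G.sameClass O a b := by
  cases O <;> simp [pairOf, pair, sameClass, hab]

end LDag

open LDag

lemma OScope.rank_le_of_sameClass_pair {O O' : OScope}
    (h : ∀ obj : Bool → Bool, (pair False obj obj).sameClass O false true →
      (pair False obj obj).sameClass O' false true) :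
    O.rank ≤ O'.rank := by
  cases O <;> cases O' <;> simp only [OScope.rank] <;> first | omega | exfalso
  · exact Bool.false_ne_true (h (fun _ => true) rfl)
  · exact Bool.false_ne_true (h id True.intro)
  · exact Bool.false_ne_true (h id True.intro)

namespace Readable

variable {A B : Config} (h : Readable A B)
include h

lemma pair_cut {O0 S0 : Type} (p : Prop) (obj : Bool → O0) (sess : Bool → S0)
    (hC : false ∉ (pair p obj sess).deps A.1 true)
    (hO : ¬ (pair p obj sess).sameClass A.2 false true) :
    false ∉ (pair p obj sess).deps B.1 true ∧
      ¬ (pair p obj sess).sameClass B.2 false true := by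
  rw [← pair_admissible_true_iff]
  exact h _ _ (inferInstanceAs (IsStrictTotalOrder Bool (· < ·))) (pair_refines p obj sess) _
    ((pair_admissible_true_iff ..).mpr ⟨hC, hO⟩)

lemma rank_le : B.2.rank ≤ A.2.rank :=
  OScope.rank_le_of_sameClass_pair fun obj hB => by_contra fun hA =>
    (h.pair_cut False obj obj (fun hd => (E_of_mem_deps _ hd).1) hA).2 hB

lemma deps_subset (G : LDag) (m : G.M) :
    G.deps B.1 m ⊆ G.deps A.1 m ∪ G.deps (kappa A.2) m := by
  intro m' hm'
  have hE := G.E_of_mem_deps hm'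
  have hne : m' ≠ m := fun he => G.irr m (he ▸ hE)
  by_contra hnot
  rw [Set.mem_union, not_or, G.mem_deps_kappa_iff A.2 hE] at hnot
  have hcut := h.pair_cut (G.E m' m) _ _
    ((G.pairOf_mem_deps_iff A.1).not.mpr hnot.1) ((G.pairOf_sameClass_iff hne A.2).not.mpr hnot.2)
  exact hcut.1 ((G.pairOf_mem_deps_iff B.1).mpr hm')

end Readable

lemma readable_of_rank_le_of_deps_subset {A B : Config} (hr : B.2.rank ≤ A.2.rank)
    (hsub : ∀ (G : LDag) (m : G.M), G.deps B.1 m ⊆ G.deps A.1 m ∪ G.deps (kappa A.2) m) :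
    Readable A B :=
  fun G _ _ href _ ⟨hcl, hpre⟩ =>
    ⟨G.closedUnder_of_deps_subset_union (hsub G) hcl (G.closedUnder_kappa href hpre),
      G.isPrefix_mono hr hpre⟩

/-- **Readability rule.** Under causal arbitration,
`A ⪯ B` iff `O_A ≥ O_B` in the chain `trivial < object < all` and, on every
finite labeled causal DAG and every message `m`,
`deps_{C_B}(m) ⊆ deps_{C_A}(m) ∪ deps_{κ(O_A)}(m)`. -/
theorem readability_rule (A B : Config) :
    Readable A B ↔
      (B.2.rank ≤ A.2.rank ∧
        ∀ G : LDag, ∀ m : G.M,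
          G.deps B.1 m ⊆ G.deps A.1 m ∪ G.deps (kappa A.2) m) :=
  ⟨fun h => ⟨h.rank_le, h.deps_subset⟩,
    fun ⟨hr, hsub⟩ => readable_of_rank_le_of_deps_subset hr hsub⟩
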